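/- arXiv:1507.07781 — 5 statements merged into one kernel-verified Lean document; each statement's English description precedes it below -/
import Mathlib

section
/- Let B be a Baire space and Y a compact metric space, and let Θ : B → K(Y) be a map that is lower semicontinuous at every point of B. Then the set of points of B at which Θ is continuous (i.e. both lower and upper semicontinuous) is residual in B. -/
open Metric Set Filter Topology

/-- Lower semicontinuity at a point for a set-valued map. -/
def LscAt {B Y : Type*} [TopologicalSpace B] [TopologicalSpace Y]
    (Θ : B → Set Y) (b : B) : Prop :=
  ∀ U : Set Y, IsOpen U → (U ∩ Θ b).Nonempty →
    ∃ V ∈ nhds b, ∀ z ∈ V, (Θ z ∩ U).Nonempty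

/-- Upper semicontinuity at a point for a set-valued map. -/
def UscAt {B Y : Type*} [TopologicalSpace B] [TopologicalSpace Y]
    (Θ : B → Set Y) (b : B) : Prop :=
  ∀ C : Set Y, IsCompact C → C ∩ Θ b = ∅ →
    ∃ V ∈ nhds b, ∀ z ∈ V, Θ z ∩ C = ∅

/-- If `Θ : B → K(Y)` is lower semicontinuous at every point of a Baire space `B`,
with `Y` a compact metric space, then the set of continuity points of `Θ` is residual. -/
theorem lsc_continuity_points_residual
    {B Y : Type*} [TopologicalSpace B] [BaireSpace B]
    [MetricSpace Y] [CompactSpace Y]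
    (Θ : B → Set Y) (hne : ∀ b, (Θ b).Nonempty) (hcpt : ∀ b, IsCompact (Θ b))
    (hlsc : ∀ b, LscAt Θ b) :
    ∃ R : Set B, IsGδ R ∧ Dense R ∧ ∀ b ∈ R, LscAt Θ b ∧ UscAt Θ b := by
  classical
  by_cases hB : Nonempty B
  · obtain ⟨b0⟩ := hB
    have hY : Nonempty Y := ⟨(hne b0).some⟩
    obtain ⟨y, hy⟩ := TopologicalSpace.exists_dense_seq Y
    set f : ℕ → B → ℝ := fun k b => infDist (y k) (Θ b) with hf
    -- each f k is upper semicontinuous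
    have husc : ∀ k b, ∀ ε > (0:ℝ), ∀ᶠ z in nhds b, f k z < f k b + ε := by
      intro k b ε hε
      have hlt : infDist (y k) (Θ b) < f k b + ε / 2 := by
        simp only [hf]; linarith
      obtain ⟨p, hp, hdp⟩ := (infDist_lt_iff (hne b)).1 hlt
      obtain ⟨V, hV, hVprop⟩ := hlsc b (ball p (ε / 2)) isOpen_ball
        ⟨p, mem_ball_self (by linarith), hp⟩
      filter_upwards [hV] with z hz
      obtain ⟨q, hqz, hqp⟩ := hVprop z hz
      calc f k z ≤ dist (y k) q := infDist_le_dist_of_mem hqz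
        _ ≤ dist (y k) p + dist p q := dist_triangle _ _ _
        _ < (f k b + ε / 2) + ε / 2 := by
            have := mem_ball'.1 hqp
            linarith
        _ = f k b + ε := by ring
    -- strict sublevel sets of f k are open
    have hopen_sub : ∀ k (c : ℝ), IsOpen {z | f k z < c} := by
      intro k c
      rw [isOpen_iff_mem_nhds]
      intro z hz
      have hz' : f k z < c := hz
      filter_upwards [husc k z (c - f k z) (by linarith)] with w hw
      simpa using by linarith [hw]
    -- the dense open sets
    set G : ℕ → ℕ → Set B := fun k n =>
      {b | ∃ V, IsOpen V ∧ b ∈ V ∧ ∀ z ∈ V, ∀ z' ∈ V,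
        dist (f k z) (f k z') ≤ 1 / (n + 1)} with hG
    have hGopen : ∀ k n, IsOpen (G k n) := by
      intro k n
      rw [isOpen_iff_mem_nhds]
      rintro b ⟨V, hVo, hbV, hVp⟩
      exact mem_of_superset (hVo.mem_nhds hbV) fun z hz => ⟨V, hVo, hz, hVp⟩
    have hGdense : ∀ k n, Dense (G k n) := by
      intro k n
      rw [dense_iff_inter_open]
      intro U hU hUne
      set εn : ℝ := 1 / (n + 1) with hεn
      have hεnpos : 0 < εn := by positivity
      have hbdd : BddBelow (f k '' U) :=
        ⟨0, fun r ⟨z, _, hz⟩ => hz ▸ infDist_nonneg⟩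
      set m : ℝ := sInf (f k '' U) with hm
      have himne : (f k '' U).Nonempty := hUne.image _
      obtain ⟨r, ⟨x, hxU, hxr⟩, hrlt⟩ :=
        exists_lt_of_csInf_lt himne (show m < m + εn / 2 by linarith)
      set V : Set B := U ∩ {z | f k z < m + εn / 2} with hV
      have hVo : IsOpen V := hU.inter (hopen_sub k _)
      have hxV : x ∈ V := ⟨hxU, by simp only [mem_setOf_eq]; rw [hxr]; exact hrlt⟩
      refine ⟨x, hxU, V, hVo, hxV, ?_⟩
      intro z hz z' hz'
      have h1 : m ≤ f k z := csInf_le hbdd ⟨z, hz.1, rfl⟩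
      have h2 : m ≤ f k z' := csInf_le hbdd ⟨z', hz'.1, rfl⟩
      have h3 : f k z < m + εn / 2 := hz.2
      have h4 : f k z' < m + εn / 2 := hz'.2
      rw [Real.dist_eq, abs_le]
      constructor <;> linarith
    refine ⟨⋂ p : ℕ × ℕ, G p.1 p.2,
      IsGδ.iInter fun p => (hGopen p.1 p.2).isGδ,
      dense_iInter_of_isOpen (fun p => hGopen p.1 p.2) (fun p => hGdense p.1 p.2),
      ?_⟩
    intro b hb
    have hbG : ∀ k n, b ∈ G k n := fun k n => by
      have := mem_iInter.1 hb (k, n); exact this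
    refine ⟨hlsc b, ?_⟩
    intro C hC hCdisj
    rcases C.eq_empty_or_nonempty with rfl | hCne
    · exact ⟨univ, univ_mem, fun z _ => inter_empty _⟩
    -- positive distance from C to Θ b
    obtain ⟨q0, hq0C, hq0min⟩ := hC.exists_isMinOn hCne
      (continuous_infDist_pt (Θ b)).continuousOn
    set ε : ℝ := infDist q0 (Θ b) with hε
    have hεpos : 0 < ε := by
      rw [hε, ((hcpt b).isClosed.notMem_iff_infDist_pos (hne b)).symm] at *
      · intro hq0
        have : q0 ∈ C ∩ Θ b := ⟨hq0C, hq0⟩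
        rw [hCdisj] at this
        exact this
    have hCfar : ∀ q ∈ C, ε ≤ infDist q (Θ b) := fun q hq => hq0min hq
    -- cover Y by finitely many balls of radius ε/3 around points y k
    have hcover : (univ : Set Y) ⊆ ⋃ k : ℕ, ball (y k) (ε / 3) := by
      intro x _
      obtain ⟨k, hk⟩ := hy.exists_dist_lt x (show (0:ℝ) < ε / 3 by linarith)
      exact mem_iUnion.2 ⟨k, mem_ball.2 hk⟩
    obtain ⟨t, ht⟩ := isCompact_univ.elim_finite_subcover
      (fun k : ℕ => ball (y k) (ε / 3)) (fun k => isOpen_ball) hcover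
    -- for each k choose n with 1/(n+1) < ε/3 and the corresponding open set
    have hchoice : ∀ k : ℕ, ∃ V, IsOpen V ∧ b ∈ V ∧ ∀ z ∈ V, ∀ z' ∈ V,
        dist (f k z) (f k z') < ε / 3 := by
      intro k
      obtain ⟨n, hn⟩ := exists_nat_one_div_lt (show (0:ℝ) < ε / 3 by linarith)
      obtain ⟨V, hVo, hbV, hVp⟩ := hbG k n
      exact ⟨V, hVo, hbV, fun z hz z' hz' =>
        lt_of_le_of_lt (hVp z hz z' hz') (by exact_mod_cast hn)⟩
    choose Vs hVso hbVs hVsp using hchoice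
    refine ⟨⋂ k ∈ t, Vs k, (Filter.biInter_finset_mem t).2 fun k _ =>
      (hVso k).mem_nhds (hbVs k), ?_⟩
    intro z hz
    rw [eq_empty_iff_forall_notMem]
    rintro q ⟨hqz, hqC⟩
    obtain ⟨k, hkt, hqk⟩ : ∃ k ∈ t, q ∈ ball (y k) (ε / 3) := by
      have := ht (mem_univ q)
      simpa using this
    have hzV : z ∈ Vs k := by
      have := mem_iInter₂.1 hz k hkt
      exact this
    have hfz : f k z ≤ dist (y k) q := infDist_le_dist_of_mem hqz
    have hdq : dist (y k) q < ε / 3 := by rw [dist_comm]; exact mem_ball.1 hqk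
    have hdist : dist (f k b) (f k z) < ε / 3 := hVsp k b (hbVs k) z hzV
    have hfb : f k b < 2 * ε / 3 := by
      have := abs_le.1 (le_of_lt (by rwa [Real.dist_eq] at hdist))
      linarith [this.1, this.2]
    have : infDist q (Θ b) < ε := by
      calc infDist q (Θ b) ≤ infDist (y k) (Θ b) + dist q (y k) :=
            infDist_le_infDist_add_dist
        _ = f k b + dist (y k) q := by rw [dist_comm]
        _ < 2 * ε / 3 + ε / 3 := by linarith
        _ = ε := by ring
    exact absurd (hCfar q hqC) (not_le.2 this)
  · exact ⟨univ, IsGδ.univ, dense_univ, fun b _ => absurd ⟨b⟩ hB⟩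
end

section
/- Let B be a Baire space and Y a compact metric space, and let Θ : B → K(Y) be a map that is upper semicontinuous at every point of B. Then the set of points of B at which Θ is continuous (i.e. both lower and upper semicontinuous) is residual in B. -/
/-- If `Θ : B → K(Y)` is upper semicontinuous at every point of a Baire space `B`,
with `Y` a compact metric space, then the set of continuity points of `Θ` is residual. -/
theorem usc_continuity_points_residual
    {B Y : Type*} [TopologicalSpace B] [BaireSpace B]
    [MetricSpace Y] [CompactSpace Y]
    (Θ : B → Set Y) (hne : ∀ b, (Θ b).Nonempty) (hcpt : ∀ b, IsCompact (Θ b))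
    (husc : ∀ b, UscAt Θ b) :
    ∃ R : Set B, IsGδ R ∧ Dense R ∧ ∀ b ∈ R, LscAt Θ b ∧ UscAt Θ b := by
  obtain ⟨s, hs_count, hs_dense⟩ := TopologicalSpace.exists_countable_dense Y
  haveI := hs_count.to_subtype
  set ι := s × {q : ℚ // 0 < q} with hι
  let F : ι → Set B := fun i => {b | (Θ b ∩ Metric.closedBall (i.1 : Y) (i.2 : ℚ)).Nonempty}
  have hFclosed : ∀ i, IsClosed (F i) := by
    intro i
    rw [← isOpen_compl_iff, isOpen_iff_mem_nhds]
    intro b hb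
    have hdisj : Metric.closedBall (i.1 : Y) (i.2 : ℚ) ∩ Θ b = ∅ := by
      rw [Set.inter_comm]
      simpa [F, Set.not_nonempty_iff_eq_empty] using hb
    obtain ⟨V, hV, hVz⟩ := husc b _ (Metric.isClosed_closedBall.isCompact) hdisj
    exact Filter.mem_of_superset hV fun z hz => by
      simp only [F, Set.mem_compl_iff, Set.mem_setOf_eq, Set.not_nonempty_iff_eq_empty]
      exact hVz z hz
  refine ⟨⋂ i, (frontier (F i))ᶜ, ?_, ?_, ?_⟩
  · exact IsGδ.iInter fun i => (isClosed_frontier.isOpen_compl).isGδ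
  · exact dense_iInter_of_isOpen (fun i => isClosed_frontier.isOpen_compl)
      (fun i => interior_eq_empty_iff_dense_compl.1 (interior_frontier (hFclosed i)))
  · intro b hb
    refine ⟨?_, husc b⟩
    intro U hU ⟨p, hpU, hpΘ⟩
    obtain ⟨ε, hε, hball⟩ := Metric.isOpen_iff.1 hU p hpU
    obtain ⟨q, hq0, hq⟩ := exists_rat_btwn (by positivity : (0:ℝ) < ε/2)
    obtain ⟨y, hyd, hy⟩ := Metric.dense_iff.1 hs_dense p q (by exact_mod_cast hq0)
    set i : ι := ⟨⟨y, hy⟩, ⟨q, by exact_mod_cast hq0⟩⟩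
    have hbF : b ∈ F i := ⟨p, hpΘ, by
      simp only [Metric.mem_closedBall]
      exact le_of_lt (by rw [dist_comm]; exact hyd)⟩
    have hbint : b ∈ interior (F i) := by
      have := Set.mem_iInter.1 hb i
      rw [frontier, (hFclosed i).closure_eq] at this
      simp only [Set.mem_compl_iff, Set.mem_diff, not_and, not_not] at this
      exact this hbF
    refine ⟨interior (F i), (isOpen_interior.mem_nhds hbint), fun z hz => ?_⟩
    obtain ⟨w, hwΘ, hwb⟩ := interior_subset hz
    refine ⟨w, hwΘ, hball ?_⟩
    have : dist w p ≤ dist w (y : Y) + dist (y : Y) p := dist_triangle _ _ _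
    have h1 : dist w (y : Y) ≤ q := Metric.mem_closedBall.1 hwb
    have h2 : dist (y : Y) p < q := hyd
    have : dist w p < 2 * q := by linarith
    exact Metric.mem_ball.2 (lt_of_lt_of_le this (by linarith))
end

section
/- Let E = ℝ^d with the Euclidean inner product, let X : E → E be continuous, and let φ : ℝ × E → E be continuously differentiable with ∂φ/∂s(s,y) = X(φ(s,y)) for all (s,y). Fix x₀ ∈ E with X(x₀) ≠ 0 and t₀ ∈ ℝ, set z = φ(t₀, x₀), and assume X(z) ≠ 0. Let N₀ = x₀ + X(x₀)^⊥ be the affine orthogonal section through x₀, and let τ : N₀ → ℝ be a function differentiable (within N₀) at x₀ with τ(x₀) = t₀. Define the Poincaré map P(y) = φ(τ(y), y) for y ∈ N₀, and assume there is a neighborhood U of x₀ in N₀ with P(y) ∈ z + X(z)^⊥ for all y ∈ U. Then for every vector v ∈ X(x₀)^⊥, the derivative of P within N₀ at x₀ satisfies D P(x₀)(v) = D_y φ(t₀, ·)(x₀)(v) + (Dτ(x₀)(v))·X(z), and consequently D P(x₀)(v) equals the orthogonal projection onto X(z)^⊥ of D_y φ(t₀, ·)(x₀)(v). In other words, the derivative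 of the Poincaré map equals the linear Poincaré map. -/
/-!
By the chain rule, `P = φ ∘ (τ, id)` has derivative `v ↦ ∂ₛφ · Dτ v + D_yφ v`, and
`∂ₛφ(t₀, x₀) = X z` by the flow equation. Since `P` maps a neighbourhood of `x₀` in `N₀` into
`z + X(z)ᗮ`, the function `y ↦ ⟪X z, P y⟫` is locally constant on `N₀`, so its derivative
`⟪X z, DP v⟫` vanishes along the tangent directions `X(x₀)ᗮ` of `N₀`. Thus `DP v ∈ X(z)ᗮ`
differs from `D_yφ v` by a multiple of `X z`, which makes it the orthogonal projection.
-/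

open Submodule Topology

theorem mem_tangentConeAt_setOf_sub_mem {E : Type*} [NormedAddCommGroup E] [NormedSpace ℝ E]
    {K : Submodule ℝ E} (x : E) {v : E} (hv : v ∈ K) :
    v ∈ tangentConeAt ℝ {y | y - x ∈ K} x := by
  have hseg : segment ℝ x (x + v) ⊆ {y | y - x ∈ K} := by
    rw [segment_eq_image']
    rintro _ ⟨θ, -, rfl⟩
    simpa using K.smul_mem θ hv
  simpa using mem_tangentConeAt_of_segment_subset hseg

section
variable {𝕜 E F G : Type*} [NontriviallyNormedField 𝕜]
  [NormedAddCommGroup E] [NormedSpace 𝕜 E] [NormedAddCommGroup F] [NormedSpace 𝕜 F]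
  [NormedAddCommGroup G] [NormedSpace 𝕜 G]

theorem HasFDerivWithinAt.map_apply_eq_zero_of_eventually_map_eq {f : E → F} {f' : E →L[𝕜] F}
    {s : Set E} {x v : E} (hf : HasFDerivWithinAt f f' s x) (ℓ : F →L[𝕜] G)
    (h : ∀ᶠ y in 𝓝[s] x, ℓ (f y) = ℓ (f x)) (hv : v ∈ tangentConeAt 𝕜 s x) :
    ℓ (f' v) = 0 :=
  (ℓ.hasFDerivAt.comp_hasFDerivWithinAt x hf).unique_on
    ((hasFDerivWithinAt_const (ℓ (f x)) x s).congr_of_eventuallyEq h rfl) hv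

theorem HasFDerivAt.apply_prod_eq {f : 𝕜 × E → G} {f' : 𝕜 × E →L[𝕜] G} {t : 𝕜} {x : E}
    {a : G} {B : E →L[𝕜] G} (hf : HasFDerivAt f f' (t, x))
    (ht : HasDerivAt (fun s => f (s, x)) a t) (hx : HasFDerivAt (fun y => f (t, y)) B x)
    (c : 𝕜) (v : E) : f' (c, v) = B v + c • a := by
  have hinl : f'.comp (.inl 𝕜 𝕜 E) = .toSpanSingleton 𝕜 a :=
    (hf.comp t ((hasFDerivAt_id t).prodMk (hasFDerivAt_const x t))).unique ht.hasFDerivAt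
  have hinr : f'.comp (.inr 𝕜 𝕜 E) = B :=
    (hf.comp x ((hasFDerivAt_const t x).prodMk (hasFDerivAt_id x))).unique hx
  rw [← f'.coprod_comp_inl_inr, hinl, hinr, ContinuousLinearMap.coprod_apply,
    ContinuousLinearMap.toSpanSingleton_apply, add_comm]

end

theorem poincare_map_derivative_general {d : ℕ}
    (X : EuclideanSpace ℝ (Fin d) → EuclideanSpace ℝ (Fin d))
    (φ : ℝ → EuclideanSpace ℝ (Fin d) → EuclideanSpace ℝ (Fin d))
    (hφ : ContDiff ℝ 1 (fun p : ℝ × EuclideanSpace ℝ (Fin d) => φ p.1 p.2))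
    (hflow : ∀ (s : ℝ) (y : EuclideanSpace ℝ (Fin d)),
      HasDerivAt (fun s : ℝ => φ s y) (X (φ s y)) s)
    (x₀ : EuclideanSpace ℝ (Fin d)) (t₀ : ℝ)
    (z : EuclideanSpace ℝ (Fin d)) (hz : z = φ t₀ x₀)
    (τ : EuclideanSpace ℝ (Fin d) → ℝ) (hτ₀ : τ x₀ = t₀)
    (Dτ : EuclideanSpace ℝ (Fin d) →L[ℝ] ℝ)
    (hτ : HasFDerivWithinAt τ Dτ {y | y - x₀ ∈ (ℝ ∙ X x₀)ᗮ} x₀)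
    (Dφt : EuclideanSpace ℝ (Fin d) →L[ℝ] EuclideanSpace ℝ (Fin d))
    (hDφt : HasFDerivAt (fun y => φ t₀ y) Dφt x₀)
    (U : Set (EuclideanSpace ℝ (Fin d)))
    (hU : U ∈ nhdsWithin x₀ {y | y - x₀ ∈ (ℝ ∙ X x₀)ᗮ})
    (hP : ∀ y ∈ U, φ (τ y) y - z ∈ (ℝ ∙ X z)ᗮ) :
    ∃ L : EuclideanSpace ℝ (Fin d) →L[ℝ] EuclideanSpace ℝ (Fin d),
      HasFDerivWithinAt (fun y => φ (τ y) y) L {y | y - x₀ ∈ (ℝ ∙ X x₀)ᗮ} x₀ ∧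
      ∀ v ∈ (ℝ ∙ X x₀)ᗮ,
        L v = Dφt v + Dτ v • X z ∧
        L v = (orthogonalProjection (ℝ ∙ X z)ᗮ (Dφt v) : EuclideanSpace ℝ (Fin d)) := by
  subst hτ₀
  obtain ⟨DF, hDF⟩ := (hφ.differentiable one_ne_zero).differentiableAt (x := (τ x₀, x₀))
  have hL := hDF.comp_hasFDerivWithinAt (f := fun y => (τ y, y)) x₀
    (hτ.prodMk (hasFDerivWithinAt_id x₀ _))
  have hDP (v) : DF (Dτ v, v) = Dφt v + Dτ v • X z :=
    hz ▸ hDF.apply_prod_eq (hflow _ _) hDφt _ _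
  refine ⟨_, hL, fun v hv => ⟨hDP v, ?_⟩⟩
  have hDP_perp : DF (Dτ v, v) ∈ (ℝ ∙ X z)ᗮ := by
    rw [mem_orthogonal_singleton_iff_inner_right]
    refine hL.map_apply_eq_zero_of_eventually_map_eq (innerSL ℝ (X z)) ?_
      (mem_tangentConeAt_setOf_sub_mem x₀ hv)
    filter_upwards [hU] with y hy
    simpa [← hz, sub_eq_zero, inner_sub_right] using
      mem_orthogonal_singleton_iff_inner_right.1 (hP y hy)
  have hcorr : Dφt v - DF (Dτ v, v) ∈ (ℝ ∙ X z)ᗮᗮ := by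
    rw [hDP, sub_add_cancel_left]
    exact le_orthogonal_orthogonal _ (neg_mem (smul_mem _ _ (mem_span_singleton_self _)))
  rw [← starProjection_apply, eq_starProjection_of_mem_orthogonal hDP_perp hcorr]
  rfl

/-- The derivative of the Poincaré map equals the linear Poincaré map.
Here `E = ℝ^d`, `X` is a continuous vector field generating the flow `φ`,
`N₀ = x₀ + X(x₀)^⊥` is the orthogonal section at `x₀`, `τ` is the transition-time
function (differentiable within `N₀` at `x₀`, with `τ x₀ = t₀`), and the Poincaré map
`P y = φ (τ y) y` sends a neighborhood `U` of `x₀` in `N₀` into the section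
`z + X(z)^⊥` through `z = φ t₀ x₀`.  Then `P` is differentiable within `N₀` at `x₀`,
with `DP(x₀) v = Dφ v + (Dτ v) • X z` for `v ∈ X(x₀)^⊥`, and this equals the
orthogonal projection of `Dφ v` onto `X(z)^⊥`. -/
theorem poincare_map_derivative {d : ℕ} (hd : 1 ≤ d)
    (X : EuclideanSpace ℝ (Fin d) → EuclideanSpace ℝ (Fin d)) (hX : Continuous X)
    (φ : ℝ → EuclideanSpace ℝ (Fin d) → EuclideanSpace ℝ (Fin d))
    (hφ : ContDiff ℝ 1 (fun p : ℝ × EuclideanSpace ℝ (Fin d) => φ p.1 p.2))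
    (hflow : ∀ (s : ℝ) (y : EuclideanSpace ℝ (Fin d)),
      HasDerivAt (fun s : ℝ => φ s y) (X (φ s y)) s)
    (x₀ : EuclideanSpace ℝ (Fin d)) (hX₀ : X x₀ ≠ 0) (t₀ : ℝ)
    (z : EuclideanSpace ℝ (Fin d)) (hz : z = φ t₀ x₀) (hXz : X z ≠ 0)
    (τ : EuclideanSpace ℝ (Fin d) → ℝ) (hτ₀ : τ x₀ = t₀)
    (Dτ : EuclideanSpace ℝ (Fin d) →L[ℝ] ℝ)
    (hτ : HasFDerivWithinAt τ Dτ {y | y - x₀ ∈ (ℝ ∙ X x₀)ᗮ} x₀)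
    (Dφt : EuclideanSpace ℝ (Fin d) →L[ℝ] EuclideanSpace ℝ (Fin d))
    (hDφt : HasFDerivAt (fun y => φ t₀ y) Dφt x₀)
    (U : Set (EuclideanSpace ℝ (Fin d)))
    (hU : U ∈ nhdsWithin x₀ {y | y - x₀ ∈ (ℝ ∙ X x₀)ᗮ})
    (hP : ∀ y ∈ U, φ (τ y) y - z ∈ (ℝ ∙ X z)ᗮ) :
    ∃ L : EuclideanSpace ℝ (Fin d) →L[ℝ] EuclideanSpace ℝ (Fin d),
      HasFDerivWithinAt (fun y => φ (τ y) y) L {y | y - x₀ ∈ (ℝ ∙ X x₀)ᗮ} x₀ ∧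
      ∀ v ∈ (ℝ ∙ X x₀)ᗮ,
        L v = Dφt v + Dτ v • X z ∧
        L v = (orthogonalProjection (ℝ ∙ X z)ᗮ (Dφt v) : EuclideanSpace ℝ (Fin d)) :=
  poincare_map_derivative_general X φ hφ hflow x₀ t₀ z hz τ hτ₀ Dτ hτ Dφt hDφt U hU hP
end

section
/- Let (K̂, f̂) be a central model and let S be a strip over K̂ with S ⊆ K̂ × [0,1] and f̂(cl(S)) ⊆ S, where cl(S) is the closure of S in K̂ × [0,1]. Then the set I := ⋂_{n≥0} f̂ⁿ(cl(S)) satisfies: (i) I is a compact strip over K̂ containing K̂ × {0}, with each fiber I ∩ ({x} × [0,∞)) a compact interval containing (x,0); (ii) f̂(I) = I; and (iii) the fiber map x ↦ I ∩ ({x} × [0,1]), viewed as a map from K̂ to the nonempty compact subsets of K̂ × [0,1], is upper semicontinuous at every point of K̂. -/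
open scoped NNReal

/-- A central model: a compact metric space `K` together with a continuous skew-product map
`f : K × [0,1] → K × [0,∞)` fixing the zero section `K × {0}` (onto it), and which is a local
homeomorphism in a small neighborhood of `K × {0}`.  The half line `[0,∞)` is modelled by
`ℝ≥0` and `[0,1]` by `Set.Iic (1 : ℝ≥0)`. -/
structure CentralModel (K : Type*) [MetricSpace K] [CompactSpace K] where
  f : K × ℝ≥0 → K × ℝ≥0
  f1 : K → K
  f2 : K × ℝ≥0 → ℝ≥0
  skew : ∀ p : K × ℝ≥0, f p = (f1 p.1, f2 p)
  zero : ∀ x : K, f2 (x, 0) = 0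
  surj : ∀ x : K, ∃ y : K, f1 y = x
  cont : ContinuousOn f (Set.univ ×ˢ Set.Iic 1)
  localHomeo : ∃ ε : ℝ≥0, 0 < ε ∧ ε ≤ 1 ∧ ∀ p : K × ℝ≥0, p.2 < ε →
    ∃ V ∈ nhds p, V ⊆ Set.univ ×ˢ Set.Iic 1 ∧ Set.InjOn f V ∧ IsOpen (f '' V) ∧
      ∃ g : K × ℝ≥0 → K × ℝ≥0, ContinuousOn g (f '' V) ∧ ∀ q ∈ V, g (f q) = q

/-- A strip over `A ⊆ K`: a subset of `A × [0,∞)` whose fiber over every `x ∈ A`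
is an interval containing `(x, 0)`. -/
def IsStrip {K : Type*} [MetricSpace K] [CompactSpace K]
    (A : Set K) (S : Set (K × ℝ≥0)) : Prop :=
  S ⊆ A ×ˢ Set.univ ∧
  ∀ x ∈ A, ((x, (0 : ℝ≥0)) ∈ S ∧ Set.OrdConnected {t : ℝ≥0 | (x, t) ∈ S})

/-!
The closure of `S` is a compact strip in `K × [0,1]` that `f̂` maps into itself, so the iterates
`f̂ⁿ(cl S)` form a decreasing sequence of compact sets. Each of them is again a strip: `f̂₁` is onto
and `f̂₂(x, 0) = 0`, so by the intermediate value theorem `f̂` carries a fiber `{y} × [0, r]` onto a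
fiber `{f̂₁ y} × [0, f̂₂(y, r)]`. Hence `I` is a compact strip. A point of `I` has a preimage in
every `f̂ⁿ(cl S)`, and Cantor's intersection theorem gives one in `I`, so `f̂(I) = I`. Upper
semicontinuity of the fibers holds for every closed subset of a product.
-/

open Set

theorem ordConnected_iff_isLowerSet_of_bot_mem {α : Type*} [Preorder α] [OrderBot α] {s : Set α}
    (hs : ⊥ ∈ s) : s.OrdConnected ↔ IsLowerSet s :=
  ⟨fun h _ _ hba ha => h.out hs ha ⟨bot_le, hba⟩, IsLowerSet.ordConnected⟩

theorem isLowerSet_preimage_prodMk_closure {X T : Type*} [TopologicalSpace X] [TopologicalSpace T]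
    [LinearOrder T] [OrderClosedTopology T] {S : Set (X × T)}
    (hS : ∀ x, IsLowerSet (Prod.mk x ⁻¹' S)) (x : X) :
    IsLowerSet (Prod.mk x ⁻¹' closure S) := fun t s hst ht => by
  have := map_mem_closure (t := S) (f := fun p : X × T => (p.1, min s p.2)) (by fun_prop) ht
    fun p hp => hS p.1 (min_le_right _ _) hp
  rwa [min_eq_left hst] at this

theorem IsCompact.preimage_prodMk {X Y : Type*} [TopologicalSpace X] [T1Space X]
    [TopologicalSpace Y] {I : Set (X × Y)} (hI : IsCompact I) (x : X) :
    IsCompact (Prod.mk x ⁻¹' I) := by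
  have hrange : range (Prod.mk x : Y → X × Y) = {x} ×ˢ univ := by
    ext ⟨a, b⟩
    simp [eq_comm]
  exact (isEmbedding_prodMkRight x).isInducing.isCompact_preimage
    (hrange ▸ isClosed_singleton.prod isClosed_univ) hI

theorem uscAt_inter_prod_singleton {X Y : Type*} [TopologicalSpace X] [T2Space X]
    [TopologicalSpace Y] {I : Set (X × Y)} (hI : IsClosed I) {B : Set Y} (hB : IsClosed B)
    (x : X) : UscAt (fun x => I ∩ {x} ×ˢ B) x := by
  intro C hC hCx
  have hproj : IsCompact (Prod.fst '' (C ∩ (I ∩ univ ×ˢ B))) :=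
    (hC.inter_right (hI.inter (isClosed_univ.prod hB))).image continuous_fst
  refine ⟨(Prod.fst '' (C ∩ (I ∩ univ ×ˢ B)))ᶜ, hproj.isClosed.isOpen_compl.mem_nhds ?_, ?_⟩
  · rintro ⟨p, ⟨hpC, hpI, -, hpB⟩, rfl⟩
    exact eq_empty_iff_forall_notMem.1 hCx p ⟨hpC, hpI, rfl, hpB⟩
  · intro z hz
    refine eq_empty_iff_forall_notMem.2 ?_
    rintro p ⟨⟨hpI, hpz, hpB⟩, hpC⟩
    exact hz ⟨p, ⟨hpC, hpI, trivial, hpB⟩, hpz⟩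

section Iterate

variable {X : Type*} {f : X → X} {T : Set X}

theorem antitone_iterate_image (hf : MapsTo f T T) : Antitone fun n => f^[n] '' T :=
  antitone_nat_of_succ_le fun n => by
    rw [Function.iterate_succ, image_comp]
    exact image_mono hf.image_subset

variable [TopologicalSpace X]

theorem IsCompact.iterate_image (hT : IsCompact T) (hcont : ContinuousOn f T)
    (hf : MapsTo f T T) (n : ℕ) : IsCompact (f^[n] '' T) :=
  hT.image_of_continuousOn (hcont.iterate hf n)

theorem IsCompact.iInter_iterate_image [T2Space X] (hT : IsCompact T) (hcont : ContinuousOn f T)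
    (hf : MapsTo f T T) : IsCompact (⋂ n, f^[n] '' T) :=
  hT.of_isClosed_subset (isClosed_iInter fun n => (hT.iterate_image hcont hf n).isClosed)
    (iInter_subset_of_subset 0 (by simp))

theorem image_iInter_iterate_image [T2Space X] (hT : IsCompact T) (hcont : ContinuousOn f T)
    (hf : MapsTo f T T) : f '' ⋂ n, f^[n] '' T = ⋂ n, f^[n] '' T := by
  have hsucc (n : ℕ) : f^[n + 1] '' T = f '' (f^[n] '' T) := by
    rw [Function.iterate_succ', image_comp]
  refine ((image_iInter_subset _ _).trans ?_).antisymm fun p hp => ?_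
  · simp_rw [← hsucc]
    exact subset_iInter fun n => iInter_subset_of_subset n (antitone_iterate_image hf n.le_succ)
  · have hclosed (n : ℕ) : IsClosed (f^[n] '' T ∩ f ⁻¹' {p}) :=
      (hcont.mono ((hf.iterate n).image_subset)).preimage_isClosed_of_isClosed
        (hT.iterate_image hcont hf n).isClosed isClosed_singleton
    have hne (n : ℕ) : (f^[n] '' T ∩ f ⁻¹' {p}).Nonempty := by
      obtain ⟨q, hq, rfl⟩ := hsucc n ▸ mem_iInter.1 hp (n + 1)
      exact ⟨q, hq, rfl⟩
    obtain ⟨q, hq⟩ := IsCompact.nonempty_iInter_of_sequence_nonempty_isCompact_isClosed _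
      (fun n => inter_subset_inter_left _ (antitone_iterate_image hf n.le_succ)) hne
      ((hT.iterate_image hcont hf 0).of_isClosed_subset (hclosed 0) inter_subset_left) hclosed
    exact ⟨q, mem_iInter.2 fun n => (mem_iInter.1 hq n).1, (mem_iInter.1 hq 0).2⟩

end Iterate

section Strip

variable {K : Type*} [MetricSpace K] [CompactSpace K]

theorem isStrip_univ_iff {S : Set (K × ℝ≥0)} :
    IsStrip univ S ↔ ∀ x, (x, 0) ∈ S ∧ IsLowerSet (Prod.mk x ⁻¹' S) := by
  refine ⟨fun h x => ?_, fun h => ⟨fun p _ => ⟨trivial, trivial⟩, fun x _ => ?_⟩⟩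
  · exact ⟨(h.2 x trivial).1, (ordConnected_iff_isLowerSet_of_bot_mem (h.2 x trivial).1).1
      (h.2 x trivial).2⟩
  · exact ⟨(h x).1, (h x).2.ordConnected⟩

theorem IsStrip.closure {S : Set (K × ℝ≥0)} (hS : IsStrip univ S) :
    IsStrip univ (closure S) := by
  rw [isStrip_univ_iff] at hS ⊢
  exact fun x => ⟨subset_closure (hS x).1,
    isLowerSet_preimage_prodMk_closure (fun y => (hS y).2) x⟩

theorem IsStrip.iInter {ι : Type*} {S : ι → Set (K × ℝ≥0)} (hS : ∀ i, IsStrip univ (S i)) :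
    IsStrip univ (⋂ i, S i) := by
  simp_rw [isStrip_univ_iff, preimage_iInter] at hS ⊢
  exact fun x => ⟨mem_iInter.2 fun i => (hS i x).1, isLowerSet_iInter fun i => (hS i x).2⟩

theorem CentralModel.continuousOn_f2 (M : CentralModel K) :
    ContinuousOn M.f2 (univ ×ˢ Iic 1) :=
  (continuous_snd.comp_continuousOn M.cont).congr fun p _ => by simp [M.skew]

theorem CentralModel.isStrip_image (M : CentralModel K) {C : Set (K × ℝ≥0)}
    (hC : IsStrip univ C) (hC1 : C ⊆ univ ×ˢ Iic 1) : IsStrip univ (M.f '' C) := by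
  rw [isStrip_univ_iff] at hC ⊢
  intro x
  constructor
  · obtain ⟨y, rfl⟩ := M.surj x
    exact ⟨(y, 0), (hC y).1, by rw [M.skew, M.zero]⟩
  · rintro t s hst ⟨⟨y, r⟩, hyr, hfyr⟩
    rw [M.skew, Prod.mk.injEq] at hfyr
    have hcont : ContinuousOn (fun u => M.f2 (y, u)) (Icc 0 r) :=
      M.continuousOn_f2.comp (Continuous.prodMk_right y).continuousOn
        fun u hu => ⟨trivial, hu.2.trans (hC1 hyr).2⟩
    have hs : s ∈ Icc (M.f2 (y, 0)) (M.f2 (y, r)) := by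
      rw [M.zero, hfyr.2]
      exact ⟨zero_le, hst⟩
    obtain ⟨u, hu, hfu⟩ := intermediate_value_Icc (zero_le : 0 ≤ r) hcont hs
    exact ⟨(y, u), (hC y).2 hu.2 hyr, by rw [M.skew, hfyr.1]; exact congrArg (x, ·) hfu⟩

end Strip

/-- For a trapping strip `S` of a central model, the maximal invariant set
`I = ⋂ₙ f̂ⁿ(cl S)` is a compact invariant strip containing the zero section, with compact
interval fibers, and its fiber map is upper semicontinuous at every point. -/
theorem central_model_maximal_invariant_strip
    {K : Type*} [MetricSpace K] [CompactSpace K] (M : CentralModel K)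
    (S : Set (K × ℝ≥0)) (hstrip : IsStrip Set.univ S) (hsub : S ⊆ Set.univ ×ˢ Set.Iic 1)
    (htrap : ∀ p ∈ closure S, M.f p ∈ S)
    (I : Set (K × ℝ≥0)) (hI : I = ⋂ n : ℕ, (M.f)^[n] '' closure S) :
    (IsCompact I ∧ IsStrip Set.univ I ∧ Set.univ ×ˢ {(0 : ℝ≥0)} ⊆ I ∧
      ∀ x : K, IsCompact {t : ℝ≥0 | (x, t) ∈ I} ∧
        Set.OrdConnected {t : ℝ≥0 | (x, t) ∈ I} ∧ (x, (0 : ℝ≥0)) ∈ I) ∧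
    M.f '' I = I ∧
    (∀ x : K, UscAt (fun x : K => I ∩ {x} ×ˢ Set.Iic 1) x) := by
  subst hI
  have hS1 : closure S ⊆ univ ×ˢ Iic 1 := closure_minimal hsub (isClosed_univ.prod isClosed_Iic)
  have hScompact : IsCompact (closure S) :=
    (isCompact_univ.prod (Icc_bot (a := (1 : ℝ≥0)) ▸ isCompact_Icc)).of_isClosed_subset isClosed_closure hS1
  have hmaps : MapsTo M.f (closure S) (closure S) := fun p hp => subset_closure (htrap p hp)
  have hcont : ContinuousOn M.f (closure S) := M.cont.mono hS1
  have hstrips (n : ℕ) : IsStrip univ (M.f^[n] '' closure S) := by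
    induction n with
    | zero => simpa using hstrip.closure
    | succ n ih =>
      rw [Function.iterate_succ', image_comp]
      exact M.isStrip_image ih ((hmaps.iterate n).image_subset.trans hS1)
  have hIcompact := hScompact.iInter_iterate_image hcont hmaps
  have hIstrip := IsStrip.iInter hstrips
  refine ⟨⟨hIcompact, hIstrip, ?_, fun x => ⟨hIcompact.preimage_prodMk x,
      (hIstrip.2 x trivial).2, (hIstrip.2 x trivial).1⟩⟩,
    image_iInter_iterate_image hScompact hcont hmaps,
    fun x => uscAt_inter_prod_singleton hIcompact.isClosed isClosed_Iic x⟩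
  rintro ⟨x, t⟩ ⟨-, rfl : t = 0⟩
  exact (hIstrip.2 x trivial).1
end

section
/- Let K̂ and Y be compact metric spaces. Let γ be a map from K̂ to the nonempty compact subsets of Y that is upper semicontinuous at every point, and let σ be a map from K̂ to the nonempty subsets of Y such that γ(x) ⊆ cl(σ(x)) for every x ∈ K̂ and such that the map x ↦ cl(σ(x)) is lower semicontinuous at every point. Then for every ε > 0 there exists δ > 0 such that for all x, y ∈ K̂ with d(x,y) < δ, the set γ(x) is contained in the open ε-neighborhood of σ(y). -/
/-- If `γ` is an everywhere upper semicontinuous compact-valued map with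
`γ x ⊆ cl (σ x)`, and `x ↦ cl (σ x)` is everywhere lower semicontinuous, then for every
`ε > 0` there is `δ > 0` such that `d(x,y) < δ` implies `γ x` lies in the open
`ε`-neighborhood of `σ y`. -/
theorem usc_lsc_uniform_neighborhood {K Y : Type*}
    [MetricSpace K] [CompactSpace K] [MetricSpace Y] [CompactSpace Y]
    (γ : K → Set Y) (hγne : ∀ x, (γ x).Nonempty) (hγc : ∀ x, IsCompact (γ x))
    (hγusc : ∀ x, UscAt γ x)
    (σ : K → Set Y) (hσne : ∀ x, (σ x).Nonempty)
    (hsub : ∀ x, γ x ⊆ closure (σ x))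
    (hσlsc : ∀ x, LscAt (fun x => closure (σ x)) x) :
    ∀ ε : ℝ, 0 < ε → ∃ δ : ℝ, 0 < δ ∧ ∀ x y : K, dist x y < δ →
      γ x ⊆ Metric.thickening ε (σ y) := by
  intro ε hε
  have hε4 : 0 < ε / 4 := by linarith
  -- key local statement
  have key : ∀ a : K, ∃ V : Set K, IsOpen V ∧ a ∈ V ∧
      ∀ x ∈ V, ∀ y ∈ V, γ x ⊆ Metric.thickening ε (σ y) := by
    intro a
    -- finite ball cover of γ a
    obtain ⟨t, htsub, htfin, htcov⟩ := (hγc a).elim_finite_subcover_image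
      (fun p (_ : p ∈ γ a) => Metric.isOpen_ball (x := p) (ε := ε / 4))
      (fun z hz => Set.mem_biUnion hz (Metric.mem_ball_self hε4))
    -- usc neighborhood
    obtain ⟨W, hWnhds, hW⟩ := hγusc a (Metric.thickening (ε / 4) (γ a))ᶜ
      ((Metric.isOpen_thickening).isClosed_compl.isCompact)
      (by
        rw [Set.eq_empty_iff_forall_notMem]
        rintro z ⟨hz1, hz2⟩
        exact hz1 (Metric.self_subset_thickening hε4 _ hz2))
    -- lsc neighborhoods for each p in t
    have hlsc : ∀ p ∈ t, ∃ V ∈ nhds a, ∀ z ∈ V,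
        ((fun x => closure (σ x)) z ∩ Metric.ball p (ε / 4)).Nonempty := by
      intro p hp
      exact hσlsc a (Metric.ball p (ε / 4)) Metric.isOpen_ball
        ⟨p, Metric.mem_ball_self hε4, hsub a (htsub hp)⟩
    choose! Vp hVpnhds hVp using hlsc
    have hinter : W ∩ ⋂ p ∈ t, Vp p ∈ nhds a :=
      Filter.inter_mem hWnhds ((Filter.biInter_mem htfin).mpr hVpnhds)
    refine ⟨interior (W ∩ ⋂ p ∈ t, Vp p), isOpen_interior,
      mem_interior_iff_mem_nhds.mpr hinter, ?_⟩
    intro x hx y hy z hz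
    have hxW : x ∈ W := (interior_subset hx).1
    have hyI : y ∈ ⋂ p ∈ t, Vp p := (interior_subset hy).2
    -- z is ε/4-close to some p' ∈ γ a
    have hzth : z ∈ Metric.thickening (ε / 4) (γ a) := by
      by_contra h
      have := hW x hxW
      rw [Set.eq_empty_iff_forall_notMem] at this
      exact this z ⟨hz, h⟩
    obtain ⟨p', hp', hdzp'⟩ := Metric.mem_thickening_iff.mp hzth
    -- p' close to some p ∈ t
    obtain ⟨p, hp, hdp'p⟩ : ∃ p ∈ t, p' ∈ Metric.ball p (ε / 4) := by
      have := htcov hp'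
      simpa using this
    -- y ∈ Vp p
    have hyVp : y ∈ Vp p := by
      have := Set.mem_iInter₂.mp hyI p hp
      exact this
    obtain ⟨w, hwcl, hwball⟩ := hVp p hp y hyVp
    obtain ⟨w', hw', hdww'⟩ := Metric.mem_closure_iff.mp hwcl (ε / 4) hε4
    refine Metric.mem_thickening_iff.mpr ⟨w', hw', ?_⟩
    have h1 : dist z w' ≤ dist z p' + dist p' p + dist p w + dist w w' := by
      calc dist z w' ≤ dist z w + dist w w' := dist_triangle _ _ _
        _ ≤ (dist z p + dist p w) + dist w w' := by
              have := dist_triangle z p w; linarith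
        _ ≤ (dist z p' + dist p' p + dist p w) + dist w w' := by
              have := dist_triangle z p' p; linarith
        _ = _ := by ring
    have hd1 : dist p' p < ε / 4 := Metric.mem_ball.mp hdp'p
    have hd2 : dist p w < ε / 4 := by
      have := Metric.mem_ball.mp hwball; rw [dist_comm]; exact this
    linarith
  choose V hVopen hVmem hV using key
  obtain ⟨δ, hδ, hδball⟩ := lebesgue_number_lemma_of_metric (s := Set.univ)
    isCompact_univ hVopen (fun x _ => Set.mem_iUnion.mpr ⟨x, hVmem x⟩)
  refine ⟨δ, hδ, fun x y hxy => ?_⟩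
  obtain ⟨a, ha⟩ := hδball x (Set.mem_univ x)
  exact hV a x (ha (Metric.mem_ball_self hδ)) y (ha (Metric.mem_ball'.mpr hxy))
end
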